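/- Let ω(ξ,η) = ξ²·coth(ξ) − ξ − η²/ξ and Ω(k₁,k₂) = ω(ξ₁,η₁) + ω(ξ₂,η₂) + ω(−ξ₁−ξ₂,−η₁−η₂) for k₁ = (ξ₁,η₁), k₂ = (ξ₂,η₂), and write ⟨ξ⟩ = √(1+ξ²). Then there exist constants c > 0 and ε ∈ (0,1) such that for all real ξ₁, ξ₂, η₁, η₂ with ξ₁ ≠ 0, ξ₂ ≠ 0, ξ₁+ξ₂ ≠ 0 and |ξ₁+ξ₂| ≤ ε|ξ₂| (the high-high regime), one has |Ω(k₁,k₂)| ≥ c·(|ξ₁+ξ₂|·ξ₂²/⟨ξ₂⟩)·( 1 + (⟨ξ₂⟩/(ξ₁+ξ₂)²)·(η₁/ξ₁ − η₂/ξ₂)² ). -/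

import Mathlib

set_option maxHeartbeats 1000000

/-- Hyperbolic cotangent. -/
noncomputable def coth (x : ℝ) : ℝ := Real.cosh x / Real.sinh x

/-- Dispersion relation of the depth-1 Camassa–Choi equation. -/
noncomputable def omega1 (ξ η : ℝ) : ℝ := ξ ^ 2 * coth ξ - ξ - η ^ 2 / ξ

/-- Resonance function restricted to the hyperplane `k₁ + k₂ + k₃ = 0`. -/
noncomputable def Omega1 (ξ₁ η₁ ξ₂ η₂ : ℝ) : ℝ :=
  omega1 ξ₁ η₁ + omega1 ξ₂ η₂ + omega1 (-(ξ₁ + ξ₂)) (-(η₁ + η₂))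

/-- Japanese bracket `⟨ξ⟩ = √(1+ξ²)`. -/
noncomputable def jb (ξ : ℝ) : ℝ := Real.sqrt (1 + ξ ^ 2)

/-! ### Auxiliary lemmas -/

lemma coth_neg' (x : ℝ) : coth (-x) = - coth x := by
  simp [coth, Real.cosh_neg, Real.sinh_neg, div_neg]

/-- `f(x) = x coth x - 1`, the symbol building block. -/
noncomputable def fres (x : ℝ) : ℝ := x * coth x - 1

lemma fres_neg (x : ℝ) : fres (-x) = fres x := by
  simp [fres, coth_neg']

lemma coth_hasDerivAt {x : ℝ} (hx : x ≠ 0) :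
    HasDerivAt coth (-1 / Real.sinh x ^ 2) x := by
  have hs : Real.sinh x ≠ 0 := Real.sinh_ne_zero.2 hx
  have h := (Real.hasDerivAt_cosh x).div (Real.hasDerivAt_sinh x) hs
  have e : Real.sinh x * Real.sinh x - Real.cosh x * Real.cosh x = -1 := by
    nlinarith [Real.cosh_sq_sub_sinh_sq x]
  rw [e] at h
  exact h

lemma fres_monoOn : StrictMonoOn (fun x : ℝ => x * coth x) (Set.Ioi 0) := by
  apply strictMonoOn_of_deriv_pos (convex_Ioi 0)
  · intro x hx
    have hs : Real.sinh x ≠ 0 := Real.sinh_ne_zero.2 (ne_of_gt hx)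
    exact ((continuousAt_id.mul ((Real.continuous_cosh.continuousAt).div
      (Real.continuous_sinh.continuousAt) hs)).continuousWithinAt)
  · intro x hx
    rw [interior_Ioi] at hx
    have hx0 : 0 < x := hx
    have hs : 0 < Real.sinh x := Real.sinh_pos_iff.2 hx0
    have hd : HasDerivAt (fun x : ℝ => x * coth x)
        (1 * coth x + x * (-1 / Real.sinh x ^ 2)) x :=
      (hasDerivAt_id x).mul (coth_hasDerivAt hx0.ne')
    rw [hd.deriv]
    have h1 : x < Real.sinh x := Real.self_lt_sinh_iff.2 hx0
    have h2 : 1 ≤ Real.cosh x := Real.one_le_cosh x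
    have e : 1 * coth x + x * (-1 / Real.sinh x ^ 2)
        = (Real.sinh x * Real.cosh x - x) / Real.sinh x ^ 2 := by
      rw [coth]
      field_simp
      ring
    rw [e]
    apply div_pos _ (by positivity)
    nlinarith

lemma fres_mono {a b : ℝ} (ha : 0 < a) (hab : a ≤ b) : fres a ≤ fres b := by
  rcases hab.eq_or_lt with h | h
  · rw [h]
  · have := fres_monoOn (Set.mem_Ioi.2 ha) (Set.mem_Ioi.2 (ha.trans h)) h
    simp only [fres]; dsimp only at this; linarith

lemma exp_bound3 {x : ℝ} (h : |x| ≤ 1) :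
    |Real.exp x - (1 + x + x^2/2)| ≤ |x|^3 * (2/9) := by
  have h3 := Real.exp_bound h (n := 3) (by norm_num)
  have hsum : ∑ m ∈ Finset.range 3, x ^ m / m.factorial = 1 + x + x^2/2 := by
    simp [Finset.sum_range_succ, Nat.factorial]
  rw [hsum] at h3
  convert h3 using 2
  norm_num [Nat.factorial]

lemma sinh_ub {x : ℝ} (h0 : 0 ≤ x) (h1 : x ≤ 1) :
    Real.sinh x ≤ x + (2/9) * x^3 := by
  have hx : |x| ≤ 1 := by rw [abs_of_nonneg h0]; exact h1
  have hx' : |(-x)| ≤ 1 := by rwa [abs_neg]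
  have A := exp_bound3 hx
  have B := exp_bound3 hx'
  rw [abs_neg] at B
  rw [abs_of_nonneg h0] at A B
  rw [abs_sub_le_iff] at A B
  rw [Real.sinh_eq]
  nlinarith [A.1, A.2, B.1, B.2]

lemma cosh_ub {x : ℝ} (h0 : 0 ≤ x) (h1 : x ≤ 1) :
    Real.cosh x ≤ 1 + x^2/2 + (2/9) * x^3 := by
  have hx : |x| ≤ 1 := by rw [abs_of_nonneg h0]; exact h1
  have hx' : |(-x)| ≤ 1 := by rwa [abs_neg]
  have A := exp_bound3 hx
  have B := exp_bound3 hx'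
  rw [abs_neg] at B
  rw [abs_of_nonneg h0] at A B
  rw [abs_sub_le_iff] at A B
  rw [Real.cosh_eq]
  nlinarith [A.1, A.2, B.1, B.2]

lemma cosh_lb (x : ℝ) : 1 + x^2/2 ≤ Real.cosh x := by
  have h : Real.cosh x = 1 + 2 * Real.sinh (x/2)^2 := by
    have h1 := Real.cosh_two_mul (x/2)
    have h2 := Real.cosh_sq (x/2)
    rw [show 2 * (x/2) = x by ring] at h1
    rw [h1, h2]; ring
  rw [h]
  have h3 : |x/2| ≤ |Real.sinh (x/2)| := by
    rw [Real.abs_sinh]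
    exact Real.self_le_sinh_iff.2 (abs_nonneg _)
  nlinarith [sq_abs (x/2), sq_abs (Real.sinh (x/2)), abs_nonneg (x/2),
    abs_nonneg (Real.sinh (x/2))]

lemma fres_eq {x : ℝ} (hx : 0 < x) :
    fres x = (x * Real.cosh x - Real.sinh x) / Real.sinh x := by
  have hs : Real.sinh x ≠ 0 := ne_of_gt (Real.sinh_pos_iff.2 hx)
  rw [fres, coth]; field_simp

lemma fres_L1 {x : ℝ} (hx : 0 < x) (h1 : x ≤ 1) : x^2/5 ≤ fres x := by
  have hs : 0 < Real.sinh x := Real.sinh_pos_iff.2 hx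
  rw [fres_eq hx, le_div_iff₀ hs]
  have h2 := sinh_ub hx.le h1
  have h3 := cosh_lb x
  have hsx : x ≤ Real.sinh x := Real.self_le_sinh_iff.2 hx.le
  have hp : x^5 ≤ x^3 := pow_le_pow_of_le_one hx.le h1 (by norm_num)
  nlinarith [mul_le_mul_of_nonneg_left h2 (by positivity : (0:ℝ) ≤ x^2/5),
    mul_le_mul_of_nonneg_left h3 hx.le]

lemma fres_U1 {x : ℝ} (hx : 0 < x) (h1 : x ≤ 1) : fres x ≤ x^2 := by
  have hs : 0 < Real.sinh x := Real.sinh_pos_iff.2 hx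
  rw [fres_eq hx, div_le_iff₀ hs]
  have h2 := cosh_ub hx.le h1
  have hsx : x ≤ Real.sinh x := Real.self_le_sinh_iff.2 hx.le
  have hp : x^4 ≤ x^3 := pow_le_pow_of_le_one hx.le h1 (by norm_num)
  nlinarith [mul_le_mul_of_nonneg_left h2 hx.le,
    mul_le_mul_of_nonneg_left hsx (by positivity : (0:ℝ) ≤ x^2)]

lemma fres_U2 {x : ℝ} (hx : 0 < x) : fres x ≤ x := by
  have hs : 0 < Real.sinh x := Real.sinh_pos_iff.2 hx
  rw [fres_eq hx, div_le_iff₀ hs]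
  have h1 : Real.cosh x - Real.sinh x = Real.exp (-x) := Real.cosh_sub_sinh x
  have h2 : Real.sinh x ≥ x * Real.exp (-x) := by
    rw [Real.sinh_eq]
    have h3 : Real.exp x = Real.exp (-x) * Real.exp (2*x) := by
      rw [← Real.exp_add]; ring_nf
    have h4 : 1 + 2*x ≤ Real.exp (2*x) := by
      have := Real.add_one_le_exp (2*x); linarith
    have h5 : 0 < Real.exp (-x) := Real.exp_pos _
    rw [h3]
    nlinarith
  nlinarith [Real.exp_pos (-x)]

lemma fres_L2 {x : ℝ} (hx : 0 < x) : x - 1 ≤ fres x := by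
  have hs : 0 < Real.sinh x := Real.sinh_pos_iff.2 hx
  rw [fres_eq hx, le_div_iff₀ hs]
  have h1 : Real.cosh x - Real.sinh x = Real.exp (-x) := Real.cosh_sub_sinh x
  nlinarith [Real.exp_pos (-x)]

lemma jb_pos (t : ℝ) : 0 < jb t := Real.sqrt_pos.2 (by positivity)

lemma one_le_jb (t : ℝ) : 1 ≤ jb t := by
  rw [jb]
  nlinarith [Real.sq_sqrt (by positivity : (0:ℝ) ≤ 1+t^2), Real.sqrt_nonneg (1+t^2),
    sq_nonneg t, sq_nonneg (Real.sqrt (1+t^2) - 1)]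

lemma self_le_jb {t : ℝ} (ht : 0 ≤ t) : t ≤ jb t := by
  rw [jb]
  nlinarith [Real.sq_sqrt (by positivity : (0:ℝ) ≤ 1+t^2), Real.sqrt_nonneg (1+t^2),
    sq_nonneg (Real.sqrt (1+t^2) - t)]

lemma gap {t : ℝ} (ht : 0 < t) :
    (1/15) * (t^2 / jb t) ≤ fres ((99/100)*t) - fres ((1/100)*t) := by
  have hJ0 := jb_pos t
  have hJ1 := one_le_jb t
  have hJt := self_le_jb ht.le
  have key1 : t^2 / jb t ≤ t^2 := by
    rw [div_le_iff₀ hJ0]; nlinarith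
  have key2 : t^2 / jb t ≤ t := by
    rw [div_le_iff₀ hJ0]; nlinarith
  have ha : (0:ℝ) < (99/100)*t := by linarith
  have hb : (0:ℝ) < (1/100)*t := by linarith
  rcases le_or_gt t 1 with h1 | h1
  · have A := fres_L1 ha (by linarith)
    have B := fres_U1 hb (by linarith)
    nlinarith
  rcases le_or_gt t (5/2) with h2 | h2
  · have A : fres (99/100) ≤ fres ((99/100)*t) := fres_mono (by norm_num) (by nlinarith)
    have A' := fres_L1 (show (0:ℝ) < 99/100 by norm_num) (by norm_num)
    have B := fres_U2 hb
    nlinarith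
  · have A := fres_L2 ha
    have B := fres_U2 hb
    nlinarith

lemma Omega1_eq (ξ₁ ξ₂ η₁ η₂ : ℝ) (h1 : ξ₁ ≠ 0) (h2 : ξ₂ ≠ 0) (hs : ξ₁ + ξ₂ ≠ 0) :
    Omega1 ξ₁ η₁ ξ₂ η₂ =
      (ξ₁ * fres ξ₁ + ξ₂ * fres ξ₂ - (ξ₁+ξ₂) * fres (ξ₁+ξ₂))
      - (ξ₁*ξ₂/(ξ₁+ξ₂)) * (η₁/ξ₁ - η₂/ξ₂)^2 := by
  simp only [Omega1, omega1, fres, coth_neg', neg_sq, div_neg, neg_neg]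
  field_simp
  ring

lemma omega1_neg (a b : ℝ) : omega1 (-a) (-b) = - omega1 a b := by
  simp only [omega1, coth_neg']; ring

lemma Omega1_neg (ξ₁ η₁ ξ₂ η₂ : ℝ) :
    Omega1 (-ξ₁) (-η₁) (-ξ₂) (-η₂) = - Omega1 ξ₁ η₁ ξ₂ η₂ := by
  simp only [Omega1, show -ξ₁ + -ξ₂ = -(ξ₁+ξ₂) by ring,
    show -η₁ + -η₂ = -(η₁+η₂) by ring, omega1_neg]
  ring

lemma jb_neg (x : ℝ) : jb (-x) = jb x := by rw [jb, jb, neg_pow]; ring_nf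

lemma RT {a J Q D : ℝ} (ha : a ≠ 0) (hJ : J ≠ 0) :
    1/15 * (a * Q / J) * (1 + J / a^2 * D^2)
      = 1/15 * a * (Q / J) + 1/15 * (Q / a) * D^2 := by
  field_simp

lemma key (ξ₁ ξ₂ η₁ η₂ : ℝ) (h1 : ξ₁ ≠ 0) (h2 : 0 < ξ₂) (hs : ξ₁ + ξ₂ ≠ 0)
    (hε : |ξ₁ + ξ₂| ≤ 1/100 * ξ₂) :
    |Omega1 ξ₁ η₁ ξ₂ η₂| ≥
      1/15 * (|ξ₁ + ξ₂| * ξ₂ ^ 2 / jb ξ₂) *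
        (1 + jb ξ₂ / (ξ₁ + ξ₂) ^ 2 * (η₁ / ξ₁ - η₂ / ξ₂) ^ 2) := by
  obtain ⟨hlb, hub⟩ := abs_le.1 hε
  have hJ0 : 0 < jb ξ₂ := jb_pos ξ₂
  have hG := gap h2
  set D : ℝ := η₁ / ξ₁ - η₂ / ξ₂ with hD
  clear_value D
  have hu_lb : (99/100)*ξ₂ ≤ -ξ₁ := by linarith
  have hu_pos : (0:ℝ) < -ξ₁ := by linarith
  have hΩ : Omega1 ξ₁ η₁ ξ₂ η₂ =
      (ξ₂ * fres ξ₂ - (-ξ₁) * fres (-ξ₁) - (ξ₁+ξ₂) * fres (ξ₁+ξ₂))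
      + ((-ξ₁)*ξ₂/(ξ₁+ξ₂)) * D^2 := by
    rw [Omega1_eq ξ₁ ξ₂ η₁ η₂ h1 h2.ne' hs, fres_neg, hD]; ring
  rcases hs.lt_or_gt with hneg | hpos
  · -- `ξ₁ + ξ₂ < 0`
    have hσ : 0 < -(ξ₁+ξ₂) := by linarith
    have hΩ' : Omega1 ξ₁ η₁ ξ₂ η₂ =
        (ξ₂ * fres ξ₂ - (-ξ₁) * fres (-ξ₁) - (ξ₁+ξ₂) * fres (ξ₁+ξ₂))
        - ((-ξ₁)*ξ₂ / -(ξ₁+ξ₂)) * D^2 := by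
      rw [hΩ, div_neg]; ring
    have m1 : fres ξ₂ ≤ fres (-ξ₁) := fres_mono h2 (by linarith)
    have m2 : fres ((99/100)*ξ₂) ≤ fres ξ₂ := fres_mono (by linarith) (by linarith)
    have m3 : fres (-(ξ₁+ξ₂)) ≤ fres ((1/100)*ξ₂) := fres_mono hσ (by linarith)
    have hfs : fres (ξ₁+ξ₂) = fres (-(ξ₁+ξ₂)) := (fres_neg (ξ₁+ξ₂)).symm
    have p1 : (-ξ₁) * fres ξ₂ ≤ (-ξ₁) * fres (-ξ₁) :=
      mul_le_mul_of_nonneg_left m1 hu_pos.le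
    have p2 : (-(ξ₁+ξ₂)) * fres (-(ξ₁+ξ₂)) ≤ (-(ξ₁+ξ₂)) * fres ((1/100)*ξ₂) :=
      mul_le_mul_of_nonneg_left m3 hσ.le
    have p3 : (-(ξ₁+ξ₂)) * fres ((99/100)*ξ₂) ≤ (-(ξ₁+ξ₂)) * fres ξ₂ :=
      mul_le_mul_of_nonneg_left m2 hσ.le
    have hA : ξ₂ * fres ξ₂ - (-ξ₁) * fres (-ξ₁) - (ξ₁+ξ₂) * fres (ξ₁+ξ₂)
        ≤ (ξ₁+ξ₂) * fres ((99/100)*ξ₂) - (ξ₁+ξ₂) * fres ((1/100)*ξ₂) := by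
      rw [hfs]; linarith
    have hdiff : 0 ≤ (-ξ₁)*ξ₂ / -(ξ₁+ξ₂) - 99/100 * (ξ₂^2 / -(ξ₁+ξ₂)) := by
      rw [show (-ξ₁)*ξ₂ / -(ξ₁+ξ₂) - 99/100 * (ξ₂^2 / -(ξ₁+ξ₂))
          = ((-ξ₁)*ξ₂ - 99/100*ξ₂^2) / -(ξ₁+ξ₂) by ring]
      exact div_nonneg (by nlinarith) hσ.le
    have hB : 99/100 * (ξ₂^2 / -(ξ₁+ξ₂)) * D^2 ≤ ((-ξ₁)*ξ₂ / -(ξ₁+ξ₂)) * D^2 := by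
      nlinarith [mul_nonneg hdiff (sq_nonneg D)]
    have habs : -Omega1 ξ₁ η₁ ξ₂ η₂ ≤ |Omega1 ξ₁ η₁ ξ₂ η₂| := by
      rw [abs_eq_max_neg]; exact le_max_right _ _
    rw [ge_iff_le, abs_of_neg hneg, ← neg_sq (ξ₁+ξ₂),
      RT (neg_ne_zero.2 hs) hJ0.ne']
    have t1 : 1/15 * (-(ξ₁+ξ₂)) * (ξ₂^2 / jb ξ₂) ≤
        (-(ξ₁+ξ₂)) * fres ((99/100)*ξ₂) - (-(ξ₁+ξ₂)) * fres ((1/100)*ξ₂) := by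
      have h := mul_le_mul_of_nonneg_left hG hσ.le
      nlinarith [h]
    have t2 : 1/15 * (ξ₂^2 / -(ξ₁+ξ₂)) * D^2 ≤ 99/100 * (ξ₂^2 / -(ξ₁+ξ₂)) * D^2 := by
      have hX : (0:ℝ) ≤ ξ₂^2 / -(ξ₁+ξ₂) := div_nonneg (sq_nonneg _) hσ.le
      nlinarith [mul_nonneg hX (sq_nonneg D)]
    linarith [habs, hΩ', hA, hB, t1, t2]
  · -- `0 < ξ₁ + ξ₂`
    have m1 : fres (-ξ₁) ≤ fres ξ₂ := fres_mono hu_pos (by linarith)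
    have m2 : fres ((99/100)*ξ₂) ≤ fres (-ξ₁) := fres_mono (by linarith) hu_lb
    have m3 : fres (ξ₁+ξ₂) ≤ fres ((1/100)*ξ₂) := fres_mono hpos (by linarith)
    have p1 : (-ξ₁) * fres (-ξ₁) ≤ (-ξ₁) * fres ξ₂ :=
      mul_le_mul_of_nonneg_left m1 hu_pos.le
    have p2 : (ξ₁+ξ₂) * fres (ξ₁+ξ₂) ≤ (ξ₁+ξ₂) * fres ((1/100)*ξ₂) :=
      mul_le_mul_of_nonneg_left m3 hpos.le
    have p3 : (ξ₁+ξ₂) * fres ((99/100)*ξ₂) ≤ (ξ₁+ξ₂) * fres (-ξ₁) :=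
      mul_le_mul_of_nonneg_left m2 hpos.le
    have p4 : (ξ₁+ξ₂) * fres (-ξ₁) ≤ (ξ₁+ξ₂) * fres ξ₂ :=
      mul_le_mul_of_nonneg_left m1 hpos.le
    have hA : (ξ₁+ξ₂) * fres ((99/100)*ξ₂) - (ξ₁+ξ₂) * fres ((1/100)*ξ₂)
        ≤ ξ₂ * fres ξ₂ - (-ξ₁) * fres (-ξ₁) - (ξ₁+ξ₂) * fres (ξ₁+ξ₂) := by
      linarith
    have hdiff : 0 ≤ (-ξ₁)*ξ₂ / (ξ₁+ξ₂) - 99/100 * (ξ₂^2 / (ξ₁+ξ₂)) := by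
      rw [show (-ξ₁)*ξ₂ / (ξ₁+ξ₂) - 99/100 * (ξ₂^2 / (ξ₁+ξ₂))
          = ((-ξ₁)*ξ₂ - 99/100*ξ₂^2) / (ξ₁+ξ₂) by ring]
      exact div_nonneg (by nlinarith) hpos.le
    have hB : 99/100 * (ξ₂^2 / (ξ₁+ξ₂)) * D^2 ≤ ((-ξ₁)*ξ₂ / (ξ₁+ξ₂)) * D^2 := by
      nlinarith [mul_nonneg hdiff (sq_nonneg D)]
    have habs : Omega1 ξ₁ η₁ ξ₂ η₂ ≤ |Omega1 ξ₁ η₁ ξ₂ η₂| := le_abs_self _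
    rw [ge_iff_le, abs_of_pos hpos, RT hs hJ0.ne']
    have t1 : 1/15 * (ξ₁+ξ₂) * (ξ₂^2 / jb ξ₂) ≤
        (ξ₁+ξ₂) * fres ((99/100)*ξ₂) - (ξ₁+ξ₂) * fres ((1/100)*ξ₂) := by
      have h := mul_le_mul_of_nonneg_left hG hpos.le
      nlinarith [h]
    have t2 : 1/15 * (ξ₂^2 / (ξ₁+ξ₂)) * D^2 ≤ 99/100 * (ξ₂^2 / (ξ₁+ξ₂)) * D^2 := by
      have hX : (0:ℝ) ≤ ξ₂^2 / (ξ₁+ξ₂) := div_nonneg (sq_nonneg _) hpos.le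
      nlinarith [mul_nonneg hX (sq_nonneg D)]
    linarith [habs, hΩ, hA, hB, t1, t2]

theorem resonance_lower_bound_high_high :
    ∃ c : ℝ, 0 < c ∧ ∃ ε : ℝ, 0 < ε ∧ ε < 1 ∧
      ∀ ξ₁ ξ₂ η₁ η₂ : ℝ, ξ₁ ≠ 0 → ξ₂ ≠ 0 → ξ₁ + ξ₂ ≠ 0 → |ξ₁ + ξ₂| ≤ ε * |ξ₂| →
        |Omega1 ξ₁ η₁ ξ₂ η₂| ≥
          c * (|ξ₁ + ξ₂| * ξ₂ ^ 2 / jb ξ₂) *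
            (1 + (jb ξ₂ / (ξ₁ + ξ₂) ^ 2) * (η₁ / ξ₁ - η₂ / ξ₂) ^ 2) := by
  refine ⟨1/15, by norm_num, 1/100, by norm_num, by norm_num, ?_⟩
  intro ξ₁ ξ₂ η₁ η₂ h1 h2 hs hε
  rcases h2.lt_or_gt with hneg | hpos
  · have hε' : |(-ξ₁) + (-ξ₂)| ≤ 1/100 * (-ξ₂) := by
      rw [show (-ξ₁) + (-ξ₂) = -(ξ₁+ξ₂) by ring, abs_neg]
      rw [abs_of_neg hneg] at hε
      linarith
    have hkey := key (-ξ₁) (-ξ₂) (-η₁) (-η₂) (neg_ne_zero.2 h1) (by linarith)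
      (by rw [show (-ξ₁) + (-ξ₂) = -(ξ₁+ξ₂) by ring]; exact neg_ne_zero.2 hs) hε'
    rw [Omega1_neg, abs_neg] at hkey
    simp only [show (-ξ₁) + (-ξ₂) = -(ξ₁+ξ₂) from by ring, abs_neg, neg_sq, jb_neg,
      neg_div_neg_eq] at hkey
    exact hkey
  · rw [abs_of_pos hpos] at hε
    exact key ξ₁ ξ₂ η₁ η₂ h1 hpos hs hε
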